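/- Fix a real number θ ≠ 0 and set α = cosh θ, β = sinh θ. Let n be an even natural number and let f be a real polynomial in two variables that is homogeneous of degree n and satisfies f(αx + βy, βx + αy) = f(x, y) for all real x, y. Then there exists a real number a such that f(x, y) = a · (x² − y²)^{n/2} for all real x, y. -/

import Mathlib

open MvPolynomial Real

private lemma aeval_diag_monomial (v : Fin 2 → ℝ) (m : Fin 2 →₀ ℕ) (r : ℝ) :
    aeval (R := ℝ) (fun i => C (v i) * X i) (monomial m r)
      = monomial m (r * (v 0 ^ m 0 * v 1 ^ m 1)) := by
  rw [aeval_monomial]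
  simp only [mul_pow, ← C_pow]
  rw [Finsupp.prod_mul, ← map_finsuppProd, monomial_eq]
  rw [Finsupp.prod_fintype _ _ (fun i => pow_zero (v i)), Fin.prod_univ_two]
  rw [algebraMap_eq, ← mul_assoc, ← C_mul]

private lemma coeff_aeval_diag (v : Fin 2 → ℝ) (g : MvPolynomial (Fin 2) ℝ)
    (d : Fin 2 →₀ ℕ) :
    coeff d (aeval (R := ℝ) (fun i => C (v i) * X i) g)
      = v 0 ^ d 0 * v 1 ^ d 1 * coeff d g := by
  induction g using MvPolynomial.induction_on' with
  | monomial m r =>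
    rw [aeval_diag_monomial]
    simp only [coeff_monomial]
    split_ifs with h
    · subst h; ring
    · ring
  | add p q hp hq =>
    simp only [map_add, coeff_add, hp, hq]; ring

private lemma eval_aeval' (x : Fin 2 → ℝ) (q : Fin 2 → MvPolynomial (Fin 2) ℝ)
    (f : MvPolynomial (Fin 2) ℝ) :
    eval x (aeval q f) = eval (fun i => eval x (q i)) f := by
  rw [aeval_def, eval_eval₂]
  have h : (eval x).comp (algebraMap ℝ (MvPolynomial (Fin 2) ℝ)) = RingHom.id ℝ := by
    ext r; simp
  rw [h, eval₂_id]

/-- A real polynomial in two variables that is homogeneous of even degree `n` and invariant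
under the hyperbolic rotation `(x, y) ↦ (cosh θ · x + sinh θ · y, sinh θ · x + cosh θ · y)`
for some fixed `θ ≠ 0` is of the form `a · (x² - y²)^{n/2}`. -/
theorem hyperbolic_invariant_even_degree (θ : ℝ) (hθ : θ ≠ 0)
    (n : ℕ) (hn : Even n) (f : MvPolynomial (Fin 2) ℝ)
    (hhom : MvPolynomial.IsHomogeneous f n)
    (hinv : ∀ x y : ℝ,
      MvPolynomial.eval
        ![Real.cosh θ * x + Real.sinh θ * y, Real.sinh θ * x + Real.cosh θ * y] f =
      MvPolynomial.eval ![x, y] f) :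
    ∃ a : ℝ, ∀ x y : ℝ,
      MvPolynomial.eval ![x, y] f = a * (x ^ 2 - y ^ 2) ^ (n / 2) := by
  obtain ⟨k, hk⟩ := hn
  set g : MvPolynomial (Fin 2) ℝ := aeval ![X 0 + X 1, X 0 - X 1] f with hgdef
  have hg_eval : ∀ u v : ℝ, eval ![u, v] g = eval ![u + v, u - v] f := by
    intro u v
    rw [hgdef, eval_aeval']
    have h : (fun i => eval ![u, v] (![X 0 + X 1, X 0 - X 1] i)) = ![u + v, u - v] := by
      funext i; fin_cases i <;> simp
    rw [h]
  -- g is homogeneous of degree n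
  have hg_hom : g.IsHomogeneous n := by
    have := hhom.aeval (n := 1) (![X 0 + X 1, X 0 - X 1] : Fin 2 → MvPolynomial (Fin 2) ℝ) (fun i => by
      fin_cases i <;>
        simp only [Fin.isValue, Matrix.cons_val_zero, Matrix.cons_val_one, Matrix.head_cons]
      · exact (isHomogeneous_X ℝ 0).add (isHomogeneous_X ℝ 1)
      · exact (isHomogeneous_X ℝ 0).sub (isHomogeneous_X ℝ 1))
    rw [hgdef]; simpa only [one_mul] using this
  -- invariance of g under the diagonal scaling
  have key : ∀ u v : ℝ,
      eval ![u, v] (aeval (R := ℝ) (fun i => C ((![exp θ, exp (-θ)]) i) * X i) g)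
        = eval ![u, v] g := by
    intro u v
    rw [eval_aeval']
    have h1 : (fun i => eval ![u, v] (C ((![exp θ, exp (-θ)]) i) * X i))
        = ![exp θ * u, exp (-θ) * v] := by
      funext i; fin_cases i <;> simp
    rw [h1, hg_eval, hg_eval]
    have e1 : cosh θ * (u + v) + sinh θ * (u - v) = exp θ * u + exp (-θ) * v := by
      rw [← cosh_add_sinh, ← cosh_sub_sinh]; ring
    have e2 : sinh θ * (u + v) + cosh θ * (u - v) = exp θ * u - exp (-θ) * v := by
      rw [← cosh_add_sinh, ← cosh_sub_sinh]; ring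
    calc eval ![exp θ * u + exp (-θ) * v, exp θ * u - exp (-θ) * v] f
        = eval ![cosh θ * (u + v) + sinh θ * (u - v),
                  sinh θ * (u + v) + cosh θ * (u - v)] f := by rw [e1, e2]
      _ = eval ![u + v, u - v] f := hinv _ _
  -- upgrade to polynomial identity
  have keyP : aeval (R := ℝ) (fun i => C ((![exp θ, exp (-θ)]) i) * X i) g = g := by
    apply MvPolynomial.funext
    intro x
    have hx : x = ![x 0, x 1] := by funext i; fin_cases i <;> rfl
    rw [hx]; exact key _ _
  -- coefficients of g vanish off the diagonal
  have hcoeff : ∀ d : Fin 2 →₀ ℕ, coeff d g ≠ 0 → d 0 = k ∧ d 1 = k := by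
    intro d hd
    have h1 := congrArg (coeff d) keyP
    rw [coeff_aeval_diag] at h1
    simp only [Matrix.cons_val_zero, Matrix.cons_val_one, Matrix.head_cons] at h1
    have h2 : exp θ ^ (d 0) * exp (-θ) ^ (d 1) = 1 :=
      mul_right_cancel₀ hd (by linarith [h1])
    have h3 : (d 0 : ℝ) * θ + (d 1 : ℝ) * (-θ) = 0 := by
      apply Real.exp_injective
      rw [Real.exp_add, Real.exp_nat_mul, Real.exp_nat_mul, Real.exp_zero]
      exact h2
    have h5 : (d 0 : ℝ) = d 1 := by
      have hθ' : θ * ((d 0 : ℝ) - d 1) = 0 := by linarith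
      rcases mul_eq_zero.mp hθ' with h | h
      · exact absurd h hθ
      · linarith
    have h6 : d 0 = d 1 := by exact_mod_cast h5
    have hdeg := hg_hom hd
    have hw : (Finsupp.weight 1) d = d 0 + d 1 := by
      rw [Finsupp.weight_apply, Finsupp.sum_fintype _ _ (by simp), Fin.sum_univ_two]
      simp
    have h7 : d 0 + d 1 = n := hw.symm.trans hdeg
    constructor <;> omega
  -- the unique monomial
  set m : Fin 2 →₀ ℕ := Finsupp.single 0 k + Finsupp.single 1 k with hm
  have hm0 : m 0 = k := by simp [hm]
  have hm1 : m 1 = k := by simp [hm, Finsupp.single_apply]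
  set c : ℝ := coeff m g with hc
  have hgm : g = monomial m c := by
    ext d
    rw [coeff_monomial]
    split_ifs with h
    · subst h; rfl
    · by_contra hd
      obtain ⟨h0, h1⟩ := hcoeff d hd
      apply h
      ext i
      fin_cases i
      · show m 0 = d 0
        rw [h0, hm0]
      · show m 1 = d 1
        rw [h1, hm1]
  refine ⟨c * (1/4) ^ k, fun x y => ?_⟩
  have hfx : eval ![x, y] f = eval ![(x + y)/2, (x - y)/2] g := by
    have h := hg_eval ((x + y)/2) ((x - y)/2)
    rw [show (x + y)/2 + (x - y)/2 = x by ring,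
        show (x + y)/2 - (x - y)/2 = y by ring] at h
    exact h.symm
  have hk2 : n / 2 = k := by omega
  rw [hfx, hgm, eval_monomial, hk2]
  rw [Finsupp.prod_fintype _ _ (by simp), Fin.prod_univ_two, hm0, hm1]
  simp only [Matrix.cons_val_zero, Matrix.cons_val_one, Matrix.head_cons]
  have hp : ((x + y)/2) ^ k * ((x - y)/2) ^ k = (1/4 : ℝ) ^ k * (x ^ 2 - y ^ 2) ^ k := by
    rw [← mul_pow, ← mul_pow]; congr 1; ring
  rw [hp]; ring
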